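/- arXiv:2208.07996 — 2 statements merged into one kernel-verified Lean document; each statement's English description precedes it below -/
import Mathlib

section
/- Let ν be the uniform distribution on n points x₁,…,xₙ ∈ ℝ^d with mean x̄, and let x̃ be the average of n i.i.d. samples from ν. Then E_ν ‖x̃ − x̄‖³ ≤ (1/n³)(∑ᵢ‖xᵢ−x̄‖² · ∑ᵢ‖xᵢ−x̄‖⁴)^{1/2} + (√3/n³)(∑ᵢ‖xᵢ−x̄‖²)^{3/2}. -/
open Finset
section
variable {d n : ℕ}

private lemma sum_fun_succ {α : Type*} [AddCommMonoid α] {m n : ℕ}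
    (f : (Fin (m+1) → Fin n) → α) :
    ∑ κ : Fin (m+1) → Fin n, f κ
      = ∑ a : Fin n, ∑ κ : Fin m → Fin n, f (Fin.cons a κ) := by
  rw [← (Fin.consEquiv fun _ => Fin n).sum_comp f, Fintype.sum_prod_type]
  rfl

private lemma cons_S {d m n : ℕ} (y : Fin n → EuclideanSpace ℝ (Fin d))
    (a : Fin n) (κ : Fin m → Fin n) :
    ∑ j : Fin (m+1), y ((Fin.cons a κ : Fin (m+1) → Fin n) j)
      = y a + ∑ j : Fin m, y (κ j) := by
  rw [Fin.sum_univ_succ]; simp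

private lemma sumS_zero (y : Fin n → EuclideanSpace ℝ (Fin d))
    (hy : ∑ a, y a = 0) :
    ∀ m, ∑ κ : Fin m → Fin n, ∑ j, y (κ j) = 0 := by
  intro m
  induction m with
  | zero => simp
  | succ m ih =>
    rw [sum_fun_succ (fun κ => ∑ j, y (κ j))]
    simp only [cons_S, Finset.sum_add_distrib, Finset.sum_const, Finset.card_univ, ih,
      smul_zero, add_zero]
    rw [← Finset.smul_sum, hy, smul_zero]

private lemma key2 (y : Fin n → EuclideanSpace ℝ (Fin d))
    (hy : ∑ a, y a = 0) (s : EuclideanSpace ℝ (Fin d)) :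
    ∑ a, ‖y a + s‖^2 = (∑ a, ‖y a‖^2) + n * ‖s‖^2 := by
  simp only [norm_add_sq_real, Finset.sum_add_distrib]
  have h1 : ∑ a, 2 * (inner ℝ (y a) s : ℝ) = 2 * (inner ℝ (∑ a, y a) s : ℝ) := by
    rw [sum_inner, Finset.mul_sum]
  rw [h1, hy, inner_zero_left, mul_zero, add_zero, Finset.sum_const, Finset.card_univ]
  simp [nsmul_eq_mul]

private lemma key4 (y : Fin n → EuclideanSpace ℝ (Fin d)) (hy : ∑ a, y a = 0) (s : EuclideanSpace ℝ (Fin d)) :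
    ∑ a, ‖y a + s‖^4 ≤ (∑ a, ‖y a‖^4) + n * ‖s‖^4
      + 6 * ((∑ a, ‖y a‖^2) * ‖s‖^2)
      + 4 * (inner ℝ (∑ a, (‖y a‖^2) • y a) s : ℝ) := by
  have e : ∀ a, ‖y a + s‖^4
      = ‖y a‖^4 + 4*(inner ℝ (y a) s:ℝ)^2 + ‖s‖^4
        + 4*(‖y a‖^2*(inner ℝ (y a) s:ℝ)) + 2*(‖y a‖^2*‖s‖^2)
        + 4*((inner ℝ (y a) s:ℝ)*‖s‖^2) := by
    intro a
    have h : ‖y a + s‖^4 = (‖y a + s‖^2)^2 := by ring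
    rw [h, norm_add_sq_real]; ring
  rw [Finset.sum_congr rfl (fun a _ => e a)]
  simp only [Finset.sum_add_distrib]
  have h1 : ∑ a, 4*(inner ℝ (y a) s:ℝ)^2 ≤ 4*((∑ a, ‖y a‖^2) * ‖s‖^2) := by
    rw [Finset.sum_mul, ← Finset.mul_sum]
    have : ∀ a : Fin n, (inner ℝ (y a) s:ℝ)^2 ≤ ‖y a‖^2 * ‖s‖^2 := by
      intro a
      have := abs_real_inner_le_norm (y a) s
      nlinarith [abs_nonneg (inner ℝ (y a) s:ℝ), sq_abs (inner ℝ (y a) s:ℝ)]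
    have := Finset.sum_le_sum (fun a (_ : a ∈ Finset.univ) => this a)
    linarith
  have h2 : ∑ _a : Fin n, (‖s‖^4 : ℝ) = n * ‖s‖^4 := by
    simp [Finset.sum_const, nsmul_eq_mul]
  have h3 : ∑ a, 4*(‖y a‖^2*(inner ℝ (y a) s:ℝ))
      = 4 * (inner ℝ (∑ a, (‖y a‖^2) • y a) s : ℝ) := by
    rw [sum_inner, Finset.mul_sum]
    congr 1; ext a
    rw [real_inner_smul_left]
  have h5 : ∑ a, 4*((inner ℝ (y a) s:ℝ)*‖s‖^2) = 0 := by
    have : ∑ a, (inner ℝ (y a) s:ℝ) = (inner ℝ (∑ a, y a) s : ℝ) := (sum_inner _ _ _).symm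
    calc ∑ a, 4*((inner ℝ (y a) s:ℝ)*‖s‖^2)
        = 4*((∑ a, (inner ℝ (y a) s:ℝ))*‖s‖^2) := by
          rw [Finset.sum_mul, ← Finset.mul_sum]
      _ = 0 := by rw [this, hy, inner_zero_left]; ring
  have h4 : ∑ a, 2*(‖y a‖^2*‖s‖^2) = 2*((∑ a, ‖y a‖^2) * ‖s‖^2) := by
    rw [Finset.sum_mul, ← Finset.mul_sum]
  rw [h2, h3, h4, h5]
  linarith

private lemma lemP {d n : ℕ} (y : Fin n → EuclideanSpace ℝ (Fin d))
    (hy : ∑ a, y a = 0) :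
    ∀ m, (n:ℝ) * ∑ κ : Fin m → Fin n, ‖∑ j, y (κ j)‖^2
      = m * n^m * ∑ a, ‖y a‖^2 := by
  intro m
  induction m with
  | zero => simp
  | succ m ih =>
    rw [sum_fun_succ (fun κ => ‖∑ j, y (κ j)‖^2)]
    simp only [cons_S]
    rw [Finset.sum_comm]
    have : ∀ κ : Fin m → Fin n, ∑ a, ‖y a + ∑ j, y (κ j)‖^2
        = (∑ a, ‖y a‖^2) + n * ‖∑ j, y (κ j)‖^2 := fun κ => key2 y hy _
    rw [Finset.sum_congr rfl (fun κ _ => this κ), Finset.sum_add_distrib,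
      Finset.sum_const, Finset.card_univ, ← Finset.mul_sum, Fintype.card_fun]
    simp only [Fintype.card_fin, nsmul_eq_mul]
    rw [mul_add, ← mul_assoc, mul_comm (n:ℝ) ((n:ℝ)*_), mul_assoc, ih]
    push_cast
    ring

private lemma lemQ (y : Fin n → EuclideanSpace ℝ (Fin d)) (hy : ∑ a, y a = 0) :
    ∀ m, (n:ℝ)^2 * ∑ κ : Fin m → Fin n, ‖∑ j, y (κ j)‖^4
      ≤ m * n^(m+1) * (∑ a, ‖y a‖^4) + 3 * m^2 * n^m * (∑ a, ‖y a‖^2)^2 := by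
  intro m
  set A : ℝ := ∑ a, ‖y a‖^2 with hA
  set B : ℝ := ∑ a, ‖y a‖^4 with hB
  induction m with
  | zero => simp
  | succ m ih =>
    set P : ℝ := ∑ κ : Fin m → Fin n, ‖∑ j, y (κ j)‖^2 with hPdef
    set Q : ℝ := ∑ κ : Fin m → Fin n, ‖∑ j, y (κ j)‖^4 with hQdef
    have step : ∑ κ : Fin (m+1) → Fin n, ‖∑ j, y (κ j)‖^4
        ≤ (n:ℝ)^m * B + n * Q + 6 * (A * P) := by
      rw [sum_fun_succ (fun κ => ‖∑ j, y (κ j)‖^4)]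
      simp only [cons_S]
      rw [Finset.sum_comm]
      have hb : ∀ κ : Fin m → Fin n,
          ∑ a, ‖y a + ∑ j, y (κ j)‖^4
            ≤ B + n * ‖∑ j, y (κ j)‖^4 + 6 * (A * ‖∑ j, y (κ j)‖^2)
              + 4 * (inner ℝ (∑ a, (‖y a‖^2) • y a) (∑ j, y (κ j)) : ℝ) :=
        fun κ => key4 y hy _
      calc ∑ κ : Fin m → Fin n, ∑ a, ‖y a + ∑ j, y (κ j)‖^4
          ≤ ∑ κ : Fin m → Fin n,
              (B + n * ‖∑ j, y (κ j)‖^4 + 6 * (A * ‖∑ j, y (κ j)‖^2)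
                + 4 * (inner ℝ (∑ a, (‖y a‖^2) • y a) (∑ j, y (κ j)) : ℝ)) :=
            Finset.sum_le_sum (fun κ _ => hb κ)
        _ = (n:ℝ)^m * B + n * Q + 6 * (A * P) := by
            simp only [Finset.sum_add_distrib, Finset.sum_const, Finset.card_univ,
              Fintype.card_fun, Fintype.card_fin, nsmul_eq_mul]
            have h4 : ∑ κ : Fin m → Fin n,
                4 * (inner ℝ (∑ a, (‖y a‖^2) • y a) (∑ j, y (κ j)) : ℝ) = 0 := by
              rw [← Finset.mul_sum, ← inner_sum, sumS_zero y hy m, inner_zero_right,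
                mul_zero]
            rw [h4]
            simp only [← Finset.mul_sum]
            push_cast
            ring
    have hP := lemP y hy m
    have hPm : (n:ℝ) * P = m * n^m * A := hP
    have hA0 : (0:ℝ) ≤ A := Finset.sum_nonneg fun a _ => by positivity
    have hB0 : (0:ℝ) ≤ B := Finset.sum_nonneg fun a _ => by positivity
    have hn0 : (0:ℝ) ≤ n := Nat.cast_nonneg n
    have hp0 : (0:ℝ) ≤ (n:ℝ)^m := by positivity
    calc (n:ℝ)^2 * ∑ κ : Fin (m+1) → Fin n, ‖∑ j, y (κ j)‖^4
        ≤ (n:ℝ)^2 * ((n:ℝ)^m * B + n * Q + 6 * (A * P)) := by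
          apply mul_le_mul_of_nonneg_left step (by positivity)
      _ = (n:ℝ)^(m+2) * B + n * ((n:ℝ)^2 * Q) + 6 * A * (n * ((n:ℝ) * P)) := by ring
      _ = (n:ℝ)^(m+2) * B + n * ((n:ℝ)^2 * Q) + 6 * A * (n * (m * n^m * A)) := by
          rw [hPm]
      _ ≤ (n:ℝ)^(m+2) * B + n * (m * n^(m+1) * B + 3 * m^2 * n^m * A^2)
            + 6 * A * (n * (m * n^m * A)) := by
          have := mul_le_mul_of_nonneg_left ih hn0
          linarith
      _ ≤ (m+1) * n^(m+1+1) * B + 3 * (m+1)^2 * n^(m+1) * A^2 := by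
          have h3 : (3 * (m:ℝ)^2 + 6 * m) ≤ 3 * ((m:ℝ)+1)^2 := by nlinarith
          have hq : (0:ℝ) ≤ (n:ℝ)^(m+1) * A^2 := by positivity
          push_cast
          ring_nf
          nlinarith [mul_le_mul_of_nonneg_right h3 hq,
            mul_nonneg (mul_nonneg hn0 hp0) (sq_nonneg A)]
    exact le_of_eq (by push_cast; ring)
private lemma sqrt_add_le' (a b : ℝ) (ha : 0 ≤ a) (hb : 0 ≤ b) :
    Real.sqrt (a + b) ≤ Real.sqrt a + Real.sqrt b := by
  have h : a + b ≤ (Real.sqrt a + Real.sqrt b)^2 := by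
    nlinarith [Real.sq_sqrt ha, Real.sq_sqrt hb, Real.sqrt_nonneg a, Real.sqrt_nonneg b]
  calc Real.sqrt (a + b) ≤ Real.sqrt ((Real.sqrt a + Real.sqrt b)^2) := Real.sqrt_le_sqrt h
    _ = Real.sqrt a + Real.sqrt b := Real.sqrt_sq (by positivity)

private lemma mainlem (hn : 0 < n) (y : Fin n → EuclideanSpace ℝ (Fin d))
    (hy : ∑ a, y a = 0) :
    ((n:ℝ)^n)⁻¹ * ∑ κ : Fin n → Fin n, ‖(n:ℝ)⁻¹ • ∑ j, y (κ j)‖^3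
      ≤ (1/(n:ℝ)^3) * Real.sqrt ((∑ a, ‖y a‖^2) * (∑ a, ‖y a‖^4))
        + (Real.sqrt 3/(n:ℝ)^3) * Real.sqrt ((∑ a, ‖y a‖^2)^3) := by
  have hn' : ((n:ℝ)) ≠ 0 := by positivity
  set A : ℝ := ∑ a, ‖y a‖^2 with hAdef
  set B : ℝ := ∑ a, ‖y a‖^4 with hBdef
  have hA0 : (0:ℝ) ≤ A := Finset.sum_nonneg fun a _ => by positivity
  have hB0 : (0:ℝ) ≤ B := Finset.sum_nonneg fun a _ => by positivity
  have hsum2 : ∑ κ : Fin n → Fin n, ‖∑ j, y (κ j)‖^2 = (n:ℝ)^n * A := by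
    have h := lemP y hy n
    exact mul_left_cancel₀ hn' (by rw [h]; ring)
  have hsum4 : ∑ κ : Fin n → Fin n, ‖∑ j, y (κ j)‖^4
      ≤ (n:ℝ)^n * B + 3 * (n:ℝ)^n * A^2 := by
    have h := lemQ y hy n
    have h2 : (0:ℝ) < (n:ℝ)^2 := by positivity
    rw [← mul_le_mul_iff_right₀ h2]
    calc (n:ℝ)^2 * ∑ κ : Fin n → Fin n, ‖∑ j, y (κ j)‖^4
        ≤ (n:ℝ) * (n:ℝ)^(n+1) * B + 3 * (n:ℝ)^2 * (n:ℝ)^n * A^2 := h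
      _ = (n:ℝ)^2 * ((n:ℝ)^n * B + 3 * (n:ℝ)^n * A^2) := by ring
  have hS3 : (0:ℝ) ≤ ∑ κ : Fin n → Fin n, ‖∑ j, y (κ j)‖^3 :=
    Finset.sum_nonneg fun κ _ => by positivity
  have hcs : (∑ κ : Fin n → Fin n, ‖∑ j, y (κ j)‖^3)^2
      ≤ (∑ κ : Fin n → Fin n, ‖∑ j, y (κ j)‖^2)
        * (∑ κ : Fin n → Fin n, ‖∑ j, y (κ j)‖^4) := by
    have h := Finset.sum_mul_sq_le_sq_mul_sq Finset.univ
      (fun κ : Fin n → Fin n => ‖∑ j, y (κ j)‖) (fun κ => ‖∑ j, y (κ j)‖^2)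
    have e1 : ∑ κ : Fin n → Fin n, ‖∑ j, y (κ j)‖ * ‖∑ j, y (κ j)‖^2
        = ∑ κ : Fin n → Fin n, ‖∑ j, y (κ j)‖^3 :=
      Finset.sum_congr rfl fun κ _ => by ring
    have e3 : ∑ κ : Fin n → Fin n, (‖∑ j, y (κ j)‖^2)^2
        = ∑ κ : Fin n → Fin n, ‖∑ j, y (κ j)‖^4 :=
      Finset.sum_congr rfl fun κ _ => by ring
    rw [e1, e3] at h
    exact h
  have hbound : ∑ κ : Fin n → Fin n, ‖∑ j, y (κ j)‖^3
      ≤ (n:ℝ)^n * (Real.sqrt (A*B) + Real.sqrt 3 * Real.sqrt (A^3)) := by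
    have h1 : ∑ κ : Fin n → Fin n, ‖∑ j, y (κ j)‖^3
        ≤ Real.sqrt (((n:ℝ)^n * A) * ((n:ℝ)^n * B + 3 * (n:ℝ)^n * A^2)) := by
      rw [Real.le_sqrt hS3 (by positivity)]
      calc (∑ κ : Fin n → Fin n, ‖∑ j, y (κ j)‖^3)^2
          ≤ (∑ κ : Fin n → Fin n, ‖∑ j, y (κ j)‖^2)
            * (∑ κ : Fin n → Fin n, ‖∑ j, y (κ j)‖^4) := hcs
        _ ≤ ((n:ℝ)^n * A) * ((n:ℝ)^n * B + 3 * (n:ℝ)^n * A^2) := by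
            rw [hsum2]
            exact mul_le_mul_of_nonneg_left hsum4 (by positivity)
    have h2 : Real.sqrt (((n:ℝ)^n * A) * ((n:ℝ)^n * B + 3 * (n:ℝ)^n * A^2))
        = (n:ℝ)^n * Real.sqrt (A*B + 3*A^3) := by
      rw [show ((n:ℝ)^n * A) * ((n:ℝ)^n * B + 3 * (n:ℝ)^n * A^2)
          = ((n:ℝ)^n)^2 * (A*B + 3*A^3) by ring,
        Real.sqrt_mul (sq_nonneg _), Real.sqrt_sq (by positivity)]
    have h3 : Real.sqrt (A*B + 3*A^3)
        ≤ Real.sqrt (A*B) + Real.sqrt 3 * Real.sqrt (A^3) := by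
      have h := sqrt_add_le' (A*B) (3*A^3) (by positivity) (by positivity)
      rwa [Real.sqrt_mul (by norm_num : (0:ℝ) ≤ 3) (A^3)] at h
    calc ∑ κ : Fin n → Fin n, ‖∑ j, y (κ j)‖^3
        ≤ Real.sqrt (((n:ℝ)^n * A) * ((n:ℝ)^n * B + 3 * (n:ℝ)^n * A^2)) := h1
      _ = (n:ℝ)^n * Real.sqrt (A*B + 3*A^3) := h2
      _ ≤ (n:ℝ)^n * (Real.sqrt (A*B) + Real.sqrt 3 * Real.sqrt (A^3)) :=
          mul_le_mul_of_nonneg_left h3 (by positivity)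
  have hnorm : ∀ κ : Fin n → Fin n, ‖(n:ℝ)⁻¹ • ∑ j, y (κ j)‖^3
      = ((n:ℝ)⁻¹)^3 * ‖∑ j, y (κ j)‖^3 := by
    intro κ
    rw [norm_smul, Real.norm_eq_abs, abs_of_nonneg (by positivity)]
    ring
  rw [Finset.sum_congr rfl fun κ _ => hnorm κ, ← Finset.mul_sum]
  have hfin : ((n:ℝ)^n)⁻¹ * (((n:ℝ)⁻¹)^3
        * ((n:ℝ)^n * (Real.sqrt (A*B) + Real.sqrt 3 * Real.sqrt (A^3))))
      = (1/(n:ℝ)^3) * Real.sqrt (A*B)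
        + (Real.sqrt 3/(n:ℝ)^3) * Real.sqrt (A^3) := by
    field_simp
  calc ((n:ℝ)^n)⁻¹ * (((n:ℝ)⁻¹)^3 * ∑ κ : Fin n → Fin n, ‖∑ j, y (κ j)‖^3)
      ≤ ((n:ℝ)^n)⁻¹ * (((n:ℝ)⁻¹)^3
          * ((n:ℝ)^n * (Real.sqrt (A*B) + Real.sqrt 3 * Real.sqrt (A^3)))) := by
        apply mul_le_mul_of_nonneg_left _ (by positivity)
        exact mul_le_mul_of_nonneg_left hbound (by positivity)
    _ = (1/(n:ℝ)^3) * Real.sqrt (A*B)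
        + (Real.sqrt 3/(n:ℝ)^3) * Real.sqrt (A^3) := hfin

end

/-- for the bootstrap mean `x̃` of `n` uniform resamples from `x₁,…,xₙ`,
`E ‖x̃-x̄‖³ ≤ (1/n³) √(∑ᵢ‖xᵢ-x̄‖² · ∑ᵢ‖xᵢ-x̄‖⁴) + (√3/n³) (∑ᵢ‖xᵢ-x̄‖²)^{3/2}`. -/
theorem stmt_6 {d n : ℕ} (hn : 0 < n)
    (x : Fin n → EuclideanSpace ℝ (Fin d))
    (xbar : EuclideanSpace ℝ (Fin d)) (hxbar : xbar = (n : ℝ)⁻¹ • ∑ i, x i) :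
    (Fintype.card (Fin n → Fin n) : ℝ)⁻¹ *
        ∑ κ : Fin n → Fin n, ‖((n : ℝ)⁻¹ • ∑ j, x (κ j)) - xbar‖ ^ 3
      ≤ (1 / (n : ℝ) ^ 3) *
          Real.sqrt ((∑ i, ‖x i - xbar‖ ^ 2) * (∑ i, ‖x i - xbar‖ ^ 4))
        + (Real.sqrt 3 / (n : ℝ) ^ 3) *
            Real.sqrt ((∑ i, ‖x i - xbar‖ ^ 2) ^ 3) := by
  have hn' : ((n:ℝ)) ≠ 0 := by positivity
  set y : Fin n → EuclideanSpace ℝ (Fin d) := fun i => x i - xbar with hydef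
  have hy : ∑ a, y a = 0 := by
    simp only [hydef, Finset.sum_sub_distrib, Finset.sum_const, Finset.card_univ,
      Fintype.card_fin]
    rw [hxbar, ← Nat.cast_smul_eq_nsmul ℝ, smul_smul, mul_inv_cancel₀ hn', one_smul,
      sub_self]
  have hterm : ∀ κ : Fin n → Fin n,
      ((n : ℝ)⁻¹ • ∑ j, x (κ j)) - xbar = (n:ℝ)⁻¹ • ∑ j, y (κ j) := by
    intro κ
    simp only [hydef]
    rw [Finset.sum_sub_distrib, Finset.sum_const, Finset.card_univ, Fintype.card_fin,
      smul_sub, ← Nat.cast_smul_eq_nsmul ℝ, smul_smul, inv_mul_cancel₀ hn', one_smul]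
  have hcard : ((Fintype.card (Fin n → Fin n) : ℕ) : ℝ) = (n:ℝ)^n := by
    rw [Fintype.card_fun]
    push_cast
    simp
  rw [hcard, Finset.sum_congr rfl fun κ _ => by rw [hterm κ]]
  exact mainlem hn y hy
end

section
/- Let x₁,…,xₙ be i.i.d. samples from a distribution μ on ℝ^d with finite eighth moments, x̄ their average, and let x̃ be the average of n points drawn i.i.d. uniformly with replacement from {x₁,…,xₙ}. Then for any positive integer k ≤ 8, E‖x̃ − x̄‖^k = O(n^{−k/2}), where the expectation is over both the sampling from μ and the resampling. -/
open MeasureTheory ProbabilityTheory Finset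

section aux
variable {E : Type*} [NormedAddCommGroup E] [InnerProductSpace ℝ E]

/-- product of nonneg reals is at most sum of card-th powers -/
lemma prod_le_sum_pow {ι : Type*} [Fintype ι] [Nonempty ι] (u : ι → ℝ) (hu : ∀ i, 0 ≤ u i) :
    ∏ i, u i ≤ ∑ i, u i ^ (Fintype.card ι) := by
  obtain ⟨i₀, hi₀⟩ := Finset.exists_max_image Finset.univ u Finset.univ_nonempty
  calc ∏ i, u i ≤ ∏ _i : ι, u i₀ := by
        exact Finset.prod_le_prod (fun i _ => hu i) (fun i _ => hi₀.2 i (Finset.mem_univ i))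
    _ = u i₀ ^ (Fintype.card ι) := by simp [Finset.prod_const, Finset.card_univ]
    _ ≤ ∑ i, u i ^ (Fintype.card ι) := by
        exact Finset.single_le_sum (fun i _ => pow_nonneg (hu i) _) (Finset.mem_univ i₀)

/-- sum over all maps κ of a function of κ j₀ -/
lemma sum_pi_eval {n : ℕ} (j₀ : Fin n) (h : Fin n → ℝ) :
    ∑ κ : Fin n → Fin n, h (κ j₀) = (n : ℝ) ^ (n - 1) * ∑ i, h i := by
  classical
  have := Equiv.sum_comp (Equiv.funSplitAt j₀ (Fin n)).symm (fun κ => h (κ j₀))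
  rw [← this]
  have hcard : Fintype.card ({ j : Fin n // j ≠ j₀ } → Fin n) = n ^ (n - 1) := by
    simp [Fintype.card_fun, Fintype.card_subtype_compl]
  rw [Fintype.sum_prod_type]
  simp only [Equiv.funSplitAt_symm_apply, dif_pos rfl]
  simp [Finset.sum_const, hcard, mul_comm, Finset.sum_mul]

/-- sum over all maps κ of ⟪Y (κ j₀), w κ⟫ * p κ vanishes when ∑ Y = 0 and
w, p do not depend on coordinate j₀. -/
lemma key_zero {n : ℕ} (Y : Fin n → E) (hY : ∑ i, Y i = 0) (j₀ : Fin n)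
    (w : (Fin n → Fin n) → E) (p : (Fin n → Fin n) → ℝ)
    (hw : ∀ κ v, w (Function.update κ j₀ v) = w κ)
    (hp : ∀ κ v, p (Function.update κ j₀ v) = p κ) :
    ∑ κ : Fin n → Fin n, (inner ℝ (Y (κ j₀)) (w κ) : ℝ) * p κ = 0 := by
  classical
  set e := Equiv.funSplitAt j₀ (Fin n) with he
  have := Equiv.sum_comp e.symm (fun κ => (inner ℝ (Y (κ j₀)) (w κ) : ℝ) * p κ)
  rw [← this, Fintype.sum_prod_type]
  have hupd : ∀ (v : Fin n) (r : { j : Fin n // j ≠ j₀ } → Fin n),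
      e.symm (v, r) = Function.update (e.symm (j₀, r)) j₀ v := by
    intro v r
    funext j
    by_cases hj : j = j₀
    · subst hj; simp [he, Equiv.funSplitAt, Function.update_self]
    · simp [he, Equiv.funSplitAt, hj, Function.update_of_ne hj]
  have key : ∀ (v : Fin n) (r : { j : Fin n // j ≠ j₀ } → Fin n),
      (inner ℝ (Y ((e.symm (v, r)) j₀)) (w (e.symm (v, r))) : ℝ) * p (e.symm (v, r))
        = (inner ℝ (Y v) (w (e.symm (j₀, r))) : ℝ) * p (e.symm (j₀, r)) := by
    intro v r
    have h1 : (e.symm (v, r)) j₀ = v := by simp [he, Equiv.funSplitAt]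
    rw [h1, hupd v r, hw, hp]
  calc ∑ v : Fin n, ∑ r : { j : Fin n // j ≠ j₀ } → Fin n,
        (inner ℝ (Y ((e.symm (v, r)) j₀)) (w (e.symm (v, r))) : ℝ) * p (e.symm (v, r))
      = ∑ v : Fin n, ∑ r : { j : Fin n // j ≠ j₀ } → Fin n,
        (inner ℝ (Y v) (w (e.symm (j₀, r))) : ℝ) * p (e.symm (j₀, r)) := by
        refine Finset.sum_congr rfl fun v _ => Finset.sum_congr rfl fun r _ => key v r
    _ = ∑ r : { j : Fin n // j ≠ j₀ } → Fin n,
        (inner ℝ (∑ v, Y v) (w (e.symm (j₀, r))) : ℝ) * p (e.symm (j₀, r)) := by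
        rw [Finset.sum_comm]
        refine Finset.sum_congr rfl fun r _ => ?_
        rw [← Finset.sum_mul, ← sum_inner]
    _ = 0 := by simp [hY]

/-- slot function: each pair-tuple `g` uses `2m` slots indexed by `Fin m × Bool` -/
def sl {n m : ℕ} (g : Fin m → Fin n × Fin n) (p : Fin m × Bool) : Fin n :=
  if p.2 then (g p.1).1 else (g p.1).2

lemma vanish_aux {n m : ℕ} (Y : Fin n → E) (hY : ∑ i, Y i = 0) (j₀ : Fin n)
    (g : Fin m → Fin n × Fin n) (a₀ : Fin m)
    (h1 : (g a₀).1 = j₀) (h2 : (g a₀).2 ≠ j₀)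
    (h3 : ∀ a, a ≠ a₀ → (g a).1 ≠ j₀ ∧ (g a).2 ≠ j₀) :
    ∑ κ : Fin n → Fin n, ∏ a, (inner ℝ (Y (κ (g a).1)) (Y (κ (g a).2)) : ℝ) = 0 := by
  classical
  have hsplit : ∀ κ : Fin n → Fin n,
      (∏ a, (inner ℝ (Y (κ (g a).1)) (Y (κ (g a).2)) : ℝ))
        = (inner ℝ (Y (κ j₀)) (Y (κ (g a₀).2)) : ℝ) *
            ∏ a ∈ Finset.univ.erase a₀, (inner ℝ (Y (κ (g a).1)) (Y (κ (g a).2)) : ℝ) := by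
    intro κ
    rw [← Finset.mul_prod_erase Finset.univ _ (Finset.mem_univ a₀), h1]
  simp only [hsplit]
  refine key_zero Y hY j₀ (fun κ => Y (κ ((g a₀).2)))
    (fun κ => ∏ a ∈ Finset.univ.erase a₀, (inner ℝ (Y (κ (g a).1)) (Y (κ (g a).2)) : ℝ))
    (fun κ v => by beta_reduce; rw [Function.update_of_ne h2]) (fun κ v => ?_)
  refine Finset.prod_congr rfl fun a ha => ?_
  have ha' := Finset.ne_of_mem_erase ha
  rw [Function.update_of_ne (h3 a ha').1, Function.update_of_ne (h3 a ha').2]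

lemma vanish {n m : ℕ} (Y : Fin n → E) (hY : ∑ i, Y i = 0) (j₀ : Fin n)
    (g : Fin m → Fin n × Fin n)
    (hcard : (Finset.univ.filter (fun p => sl g p = j₀)).card = 1) :
    ∑ κ : Fin n → Fin n, ∏ a, (inner ℝ (Y (κ (g a).1)) (Y (κ (g a).2)) : ℝ) = 0 := by
  classical
  obtain ⟨p₀, hp₀⟩ := Finset.card_eq_one.mp hcard
  have hmem : sl g p₀ = j₀ := by
    have : p₀ ∈ Finset.univ.filter (fun p => sl g p = j₀) := hp₀ ▸ Finset.mem_singleton_self p₀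
    exact (Finset.mem_filter.mp this).2
  have huniq : ∀ p : Fin m × Bool, sl g p = j₀ → p = p₀ := by
    intro p hp
    have : p ∈ Finset.univ.filter (fun q => sl g q = j₀) :=
      Finset.mem_filter.mpr ⟨Finset.mem_univ p, hp⟩
    rw [hp₀] at this
    exact Finset.mem_singleton.mp this
  obtain ⟨a₀, b₀⟩ := p₀
  cases b₀ with
  | true =>
    have h1 : (g a₀).1 = j₀ := hmem
    have h2 : (g a₀).2 ≠ j₀ := fun h => by
      have := huniq (a₀, false) h; simp at this
    have h3 : ∀ a, a ≠ a₀ → (g a).1 ≠ j₀ ∧ (g a).2 ≠ j₀ := by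
      intro a ha
      constructor
      · intro h; exact ha (congrArg Prod.fst (huniq (a, true) h))
      · intro h; exact ha (congrArg Prod.fst (huniq (a, false) h))
    exact vanish_aux Y hY j₀ g a₀ h1 h2 h3
  | false =>
    have h1 : (g a₀).2 = j₀ := hmem
    have h2 : (g a₀).1 ≠ j₀ := fun h => by
      have := huniq (a₀, true) h; simp at this
    have h3 : ∀ a, a ≠ a₀ → (g a).1 ≠ j₀ ∧ (g a).2 ≠ j₀ := by
      intro a ha
      constructor
      · intro h; exact ha (congrArg Prod.fst (huniq (a, true) h))
      · intro h; exact ha (congrArg Prod.fst (huniq (a, false) h))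
    set g' : Fin m → Fin n × Fin n := fun a => if a = a₀ then ((g a).2, (g a).1) else g a with hg'
    have hswap : ∀ κ : Fin n → Fin n,
        (∏ a, (inner ℝ (Y (κ (g a).1)) (Y (κ (g a).2)) : ℝ))
          = ∏ a, (inner ℝ (Y (κ (g' a).1)) (Y (κ (g' a).2)) : ℝ) := by
      intro κ
      refine Finset.prod_congr rfl fun a _ => ?_
      by_cases ha : a = a₀
      · subst ha; simp [hg', real_inner_comm]
      · simp [hg', ha]
    simp only [hswap]
    refine vanish_aux Y hY j₀ g' a₀ (by simp [hg', h1]) (by simp [hg', h2]) ?_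
    intro a ha
    simp only [hg', if_neg ha]
    exact h3 a ha

lemma card_good_le {n m : ℕ} (hm : 1 ≤ m) :
    ((Finset.univ : Finset (Fin m → Fin n × Fin n)).filter
        (fun g => ∀ j, (Finset.univ.filter (fun p => sl g p = j)).card ≠ 1)).card
      ≤ m ^ (2 * m) * n ^ m := by
  classical
  set S := (Finset.univ : Finset (Fin m → Fin n × Fin n)).filter
      (fun g => ∀ j, (Finset.univ.filter (fun p => sl g p = j)).card ≠ 1) with hS
  set Φ : ((Fin m → Fin m × Fin m) × (Fin m → Fin n)) → (Fin m → Fin n × Fin n) :=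
    fun q a => (q.2 (q.1 a).1, q.2 (q.1 a).2) with hΦ
  have hsub : S ⊆ Finset.image Φ Finset.univ := by
    intro g hg
    have hgood : ∀ j, (Finset.univ.filter (fun p => sl g p = j)).card ≠ 1 :=
      (Finset.mem_filter.mp hg).2
    set U : Finset (Fin n) := Finset.image (sl g) Finset.univ with hU
    -- every used index is used at least twice, so |U| ≤ m
    have hUm : U.card ≤ m := by
      have htot : (Finset.univ : Finset (Fin m × Bool)).card
          = ∑ j ∈ U, (Finset.univ.filter (fun p => sl g p = j)).card := by
        refine Finset.card_eq_sum_card_fiberwise (fun p _ => ?_)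
        exact Finset.mem_image_of_mem _ (Finset.mem_univ p)
      have hcard2 : (Finset.univ : Finset (Fin m × Bool)).card = 2 * m := by
        simp [Finset.card_univ, Fintype.card_prod, mul_comm]
      have hlow : U.card * 2 ≤ ∑ j ∈ U, (Finset.univ.filter (fun p => sl g p = j)).card := by
        rw [Finset.card_eq_sum_ones U, Finset.sum_mul, one_mul]
        refine Finset.sum_le_sum (fun j hj => ?_)
        obtain ⟨p, _, hp⟩ := Finset.mem_image.mp hj
        have hpos : 0 < (Finset.univ.filter (fun p => sl g p = j)).card :=
          Finset.card_pos.mpr ⟨p, Finset.mem_filter.mpr ⟨Finset.mem_univ p, hp⟩⟩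
        have hne := hgood j
        omega
      have : U.card * 2 ≤ 2 * m := by rw [← hcard2, htot]; exact hlow
      omega
    -- construct a factorization g = Φ (h, e)
    have i₀ : Fin n := (g ⟨0, hm⟩).1
    set e : Fin m → Fin n := fun a => if h : (a : ℕ) < U.card
        then ((U.orderIsoOfFin rfl) ⟨a, h⟩ : Fin n) else i₀ with he
    have hidx : ∀ j (hj : j ∈ U),
        e (Fin.castLE hUm ((U.orderIsoOfFin rfl).symm ⟨j, hj⟩)) = j := by
      intro j hj
      have hlt : ((Fin.castLE hUm ((U.orderIsoOfFin rfl).symm ⟨j, hj⟩) : Fin m) : ℕ)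
          < U.card := by
        simpa using ((U.orderIsoOfFin rfl).symm ⟨j, hj⟩).isLt
      simp only [he, dif_pos hlt]
      have : (⟨(Fin.castLE hUm ((U.orderIsoOfFin rfl).symm ⟨j, hj⟩) : Fin m), hlt⟩
          : Fin U.card) = (U.orderIsoOfFin rfl).symm ⟨j, hj⟩ := by
        apply Fin.ext; rfl
      rw [this]
      simp
    have hmem1 : ∀ a, (g a).1 ∈ U := fun a =>
      Finset.mem_image.mpr ⟨(a, true), Finset.mem_univ _, rfl⟩
    have hmem2 : ∀ a, (g a).2 ∈ U := fun a =>
      Finset.mem_image.mpr ⟨(a, false), Finset.mem_univ _, rfl⟩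
    refine Finset.mem_image.mpr ⟨(fun a =>
      (Fin.castLE hUm ((U.orderIsoOfFin rfl).symm ⟨(g a).1, hmem1 a⟩),
       Fin.castLE hUm ((U.orderIsoOfFin rfl).symm ⟨(g a).2, hmem2 a⟩)), e),
      Finset.mem_univ _, ?_⟩
    funext a
    exact Prod.ext (hidx _ (hmem1 a)) (hidx _ (hmem2 a))
  calc S.card ≤ (Finset.image Φ Finset.univ).card := Finset.card_le_card hsub
    _ ≤ (Finset.univ : Finset ((Fin m → Fin m × Fin m) × (Fin m → Fin n))).card :=
        Finset.card_image_le
    _ = m ^ (2 * m) * n ^ m := by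
        rw [Finset.card_univ, Fintype.card_prod, Fintype.card_fun, Fintype.card_fun,
          Fintype.card_prod, Fintype.card_fin, Fintype.card_fin]
        ring

lemma per_term {n m : ℕ} (hm : 1 ≤ m) (Y : Fin n → E) (g : Fin m → Fin n × Fin n) :
    |∑ κ : Fin n → Fin n, ∏ a, (inner ℝ (Y (κ (g a).1)) (Y (κ (g a).2)) : ℝ)|
      ≤ (2 * m : ℝ) * ((n : ℝ) ^ (n - 1) * ∑ i, ‖Y i‖ ^ (2 * m)) := by
  classical
  have : Nonempty (Fin m) := ⟨⟨0, hm⟩⟩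
  have hcard : Fintype.card (Fin m × Bool) = 2 * m := by
    simp [Fintype.card_prod, mul_comm]
  calc |∑ κ : Fin n → Fin n, ∏ a, (inner ℝ (Y (κ (g a).1)) (Y (κ (g a).2)) : ℝ)|
      ≤ ∑ κ : Fin n → Fin n, |∏ a, (inner ℝ (Y (κ (g a).1)) (Y (κ (g a).2)) : ℝ)| :=
        Finset.abs_sum_le_sum_abs _ _
    _ ≤ ∑ κ : Fin n → Fin n, ∑ p : Fin m × Bool, ‖Y (κ (sl g p))‖ ^ (2 * m) := by
        refine Finset.sum_le_sum (fun κ _ => ?_)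
        calc |∏ a, (inner ℝ (Y (κ (g a).1)) (Y (κ (g a).2)) : ℝ)|
            = ∏ a, |(inner ℝ (Y (κ (g a).1)) (Y (κ (g a).2)) : ℝ)| := Finset.abs_prod _ _
          _ ≤ ∏ a, (‖Y (κ (g a).1)‖ * ‖Y (κ (g a).2)‖) := by
              refine Finset.prod_le_prod (fun a _ => abs_nonneg _) (fun a _ => ?_)
              exact abs_real_inner_le_norm _ _
          _ = ∏ p : Fin m × Bool, ‖Y (κ (sl g p))‖ := by
              rw [Fintype.prod_prod_type]
              refine Finset.prod_congr rfl (fun a _ => ?_)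
              simp [sl, mul_comm]
          _ ≤ ∑ p : Fin m × Bool, ‖Y (κ (sl g p))‖ ^ (Fintype.card (Fin m × Bool)) :=
              prod_le_sum_pow _ (fun p => norm_nonneg _)
          _ = ∑ p : Fin m × Bool, ‖Y (κ (sl g p))‖ ^ (2 * m) := by rw [hcard]
    _ = ∑ p : Fin m × Bool, ∑ κ : Fin n → Fin n, ‖Y (κ (sl g p))‖ ^ (2 * m) :=
        Finset.sum_comm
    _ = ∑ _p : Fin m × Bool, ((n : ℝ) ^ (n - 1) * ∑ i, ‖Y i‖ ^ (2 * m)) := by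
        refine Finset.sum_congr rfl (fun p _ => ?_)
        exact sum_pi_eval (sl g p) (fun i => ‖Y i‖ ^ (2 * m))
    _ = (2 * m : ℝ) * ((n : ℝ) ^ (n - 1) * ∑ i, ‖Y i‖ ^ (2 * m)) := by
        rw [Finset.sum_const, Finset.card_univ, hcard, nsmul_eq_mul]
        push_cast; ring

lemma lemmaA {n m : ℕ} (hm : 1 ≤ m) (Y : Fin n → E) (hY : ∑ i, Y i = 0) :
    ∑ κ : Fin n → Fin n, ‖∑ j, Y (κ j)‖ ^ (2 * m)
      ≤ ((m : ℝ) ^ (2 * m) * (n : ℝ) ^ m) *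
          ((2 * m : ℝ) * ((n : ℝ) ^ (n - 1) * ∑ i, ‖Y i‖ ^ (2 * m))) := by
  classical
  -- Step 1: expand the power of the norm into a sum over pair-tuples
  have hexp : ∀ κ : Fin n → Fin n,
      ‖∑ j, Y (κ j)‖ ^ (2 * m)
        = ∑ g : Fin m → Fin n × Fin n, ∏ a, (inner ℝ (Y (κ (g a).1)) (Y (κ (g a).2)) : ℝ) := by
    intro κ
    have h1 : ‖∑ j, Y (κ j)‖ ^ (2 * m)
        = ((inner ℝ (∑ j, Y (κ j)) (∑ j, Y (κ j)) : ℝ)) ^ m := by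
      rw [real_inner_self_eq_norm_sq, ← pow_mul, mul_comm 2 m, mul_comm m 2]
    have h2 : (inner ℝ (∑ j, Y (κ j)) (∑ j, Y (κ j)) : ℝ)
        = ∑ p : Fin n × Fin n, (inner ℝ (Y (κ p.1)) (Y (κ p.2)) : ℝ) := by
      rw [sum_inner, Fintype.sum_prod_type]
      refine Finset.sum_congr rfl (fun j _ => ?_)
      rw [inner_sum]
    have h3 : (∑ p : Fin n × Fin n, (inner ℝ (Y (κ p.1)) (Y (κ p.2)) : ℝ)) ^ m
        = ∑ g : Fin m → Fin n × Fin n, ∏ a, (inner ℝ (Y (κ (g a).1)) (Y (κ (g a).2)) : ℝ) := by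
      calc (∑ p : Fin n × Fin n, (inner ℝ (Y (κ p.1)) (Y (κ p.2)) : ℝ)) ^ m
          = ∏ _a : Fin m, ∑ p : Fin n × Fin n, (inner ℝ (Y (κ p.1)) (Y (κ p.2)) : ℝ) := by
            rw [Finset.prod_const, Finset.card_univ, Fintype.card_fin]
        _ = ∑ g ∈ Fintype.piFinset (fun _ : Fin m => (Finset.univ : Finset (Fin n × Fin n))),
            ∏ a, (inner ℝ (Y (κ (g a).1)) (Y (κ (g a).2)) : ℝ) := Finset.prod_univ_sum _ _
        _ = ∑ g : Fin m → Fin n × Fin n, ∏ a, (inner ℝ (Y (κ (g a).1)) (Y (κ (g a).2)) : ℝ) := by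
            rw [Fintype.piFinset_univ]
    rw [h1, h2, h3]
  set S := (Finset.univ : Finset (Fin m → Fin n × Fin n)).filter
      (fun g => ∀ j, (Finset.univ.filter (fun p => sl g p = j)).card ≠ 1) with hS
  set T : (Fin m → Fin n × Fin n) → ℝ :=
    fun g => ∑ κ : Fin n → Fin n, ∏ a, (inner ℝ (Y (κ (g a).1)) (Y (κ (g a).2)) : ℝ) with hT
  have hB : (0 : ℝ) ≤ (2 * m : ℝ) * ((n : ℝ) ^ (n - 1) * ∑ i, ‖Y i‖ ^ (2 * m)) := by
    positivity
  calc ∑ κ : Fin n → Fin n, ‖∑ j, Y (κ j)‖ ^ (2 * m)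
      = ∑ g : Fin m → Fin n × Fin n, T g := by
        simp only [hexp]; exact Finset.sum_comm
    _ = ∑ g ∈ S, T g := by
        refine (Finset.sum_subset (Finset.subset_univ S) (fun g _ hg => ?_)).symm
        have : ¬ (∀ j, (Finset.univ.filter (fun p => sl g p = j)).card ≠ 1) := by
          intro h
          exact hg (Finset.mem_filter.mpr ⟨Finset.mem_univ g, h⟩)
        push_neg at this
        obtain ⟨j₀, hj₀⟩ := this
        exact vanish Y hY j₀ g hj₀
    _ ≤ ∑ g ∈ S, |T g| := Finset.sum_le_sum (fun g _ => le_abs_self _)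
    _ ≤ ∑ _g ∈ S, (2 * m : ℝ) * ((n : ℝ) ^ (n - 1) * ∑ i, ‖Y i‖ ^ (2 * m)) :=
        Finset.sum_le_sum (fun g _ => per_term hm Y g)
    _ = (S.card : ℝ) * ((2 * m : ℝ) * ((n : ℝ) ^ (n - 1) * ∑ i, ‖Y i‖ ^ (2 * m))) := by
        rw [Finset.sum_const, nsmul_eq_mul]
    _ ≤ ((m : ℝ) ^ (2 * m) * (n : ℝ) ^ m) *
          ((2 * m : ℝ) * ((n : ℝ) ^ (n - 1) * ∑ i, ‖Y i‖ ^ (2 * m))) := by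
        refine mul_le_mul_of_nonneg_right ?_ hB
        have := card_good_le (n := n) (m := m) hm
        calc (S.card : ℝ) ≤ ((m ^ (2 * m) * n ^ m : ℕ) : ℝ) := by exact_mod_cast this
          _ = (m : ℝ) ^ (2 * m) * (n : ℝ) ^ m := by push_cast; ring

lemma centered_sum_le {n m : ℕ} (hn : 1 ≤ n) (hm : 1 ≤ m) (x : ℕ → E) :
    ∑ i ∈ Finset.range n, ‖x i - (n : ℝ)⁻¹ • ∑ l ∈ Finset.range n, x l‖ ^ (2 * m)
      ≤ 2 ^ (2 * m + 1) * ∑ i ∈ Finset.range n, ‖x i‖ ^ (2 * m) := by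
  have hn0 : (n : ℝ) ≠ 0 := Nat.cast_ne_zero.mpr (by omega)
  have hnpos : (0 : ℝ) < n := by positivity
  set xb : E := (n : ℝ)⁻¹ • ∑ l ∈ Finset.range n, x l with hxb
  -- bound on the mean's norm power
  have hxbn : ‖xb‖ ^ (2 * m) ≤ (n : ℝ)⁻¹ * ∑ i ∈ Finset.range n, ‖x i‖ ^ (2 * m) := by
    have h1 : ‖xb‖ ≤ (n : ℝ)⁻¹ * ∑ i ∈ Finset.range n, ‖x i‖ := by
      rw [hxb]
      calc ‖(n : ℝ)⁻¹ • ∑ l ∈ Finset.range n, x l‖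
          = (n : ℝ)⁻¹ * ‖∑ l ∈ Finset.range n, x l‖ := by
            rw [norm_smul, Real.norm_eq_abs, abs_of_nonneg (by positivity)]
        _ ≤ (n : ℝ)⁻¹ * ∑ i ∈ Finset.range n, ‖x i‖ := by
            exact mul_le_mul_of_nonneg_left (norm_sum_le _ _) (by positivity)
    have h2 : ‖xb‖ ^ (2 * m) ≤ ((n : ℝ)⁻¹ * ∑ i ∈ Finset.range n, ‖x i‖) ^ (2 * m) :=
      pow_le_pow_left₀ (norm_nonneg _) h1 _
    have h3 : (∑ i ∈ Finset.range n, ‖x i‖) ^ (2 * m) / (n : ℝ) ^ (2 * m - 1)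
        ≤ ∑ i ∈ Finset.range n, ‖x i‖ ^ (2 * m) := by
      have := pow_sum_div_card_le_sum_pow (s := Finset.range n)
        (f := fun i => ‖x i‖) (fun i _ => norm_nonneg _) (2 * m - 1)
      have h2m : 2 * m - 1 + 1 = 2 * m := by omega
      rw [h2m] at this
      simpa using this
    refine h2.trans ?_
    have heq : ((n : ℝ)⁻¹ * ∑ i ∈ Finset.range n, ‖x i‖) ^ (2 * m)
        = (n : ℝ)⁻¹ * ((∑ i ∈ Finset.range n, ‖x i‖) ^ (2 * m) / (n : ℝ) ^ (2 * m - 1)) := by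
      rw [mul_pow]
      rw [show (2 * m : ℕ) = (2 * m - 1) + 1 by omega]
      field_simp
      rw [Nat.add_sub_cancel, one_div, inv_pow, pow_succ (n : ℝ)]
      field_simp
    rw [heq]
    exact mul_le_mul_of_nonneg_left h3 (by positivity)
  calc ∑ i ∈ Finset.range n, ‖x i - xb‖ ^ (2 * m)
      ≤ ∑ i ∈ Finset.range n, 2 ^ (2 * m) * (‖x i‖ ^ (2 * m) + ‖xb‖ ^ (2 * m)) := by
        refine Finset.sum_le_sum (fun i _ => ?_)
        calc ‖x i - xb‖ ^ (2 * m) ≤ (‖x i‖ + ‖xb‖) ^ (2 * m) :=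
              pow_le_pow_left₀ (norm_nonneg _) (norm_sub_le _ _) _
          _ ≤ (2 * max ‖x i‖ ‖xb‖) ^ (2 * m) := by
              refine pow_le_pow_left₀ (by positivity) ?_ _
              rcases le_total ‖x i‖ ‖xb‖ with h | h
              · rw [max_eq_right h]; linarith
              · rw [max_eq_left h]; linarith
          _ = 2 ^ (2 * m) * (max ‖x i‖ ‖xb‖) ^ (2 * m) := by rw [mul_pow]
          _ ≤ 2 ^ (2 * m) * (‖x i‖ ^ (2 * m) + ‖xb‖ ^ (2 * m)) := by
              refine mul_le_mul_of_nonneg_left ?_ (by positivity)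
              rcases le_total ‖x i‖ ‖xb‖ with h | h
              · rw [max_eq_right h]; nlinarith [pow_nonneg (norm_nonneg (x i)) (2 * m)]
              · rw [max_eq_left h]; nlinarith [pow_nonneg (norm_nonneg xb) (2 * m)]
    _ = 2 ^ (2 * m) * (∑ i ∈ Finset.range n, ‖x i‖ ^ (2 * m)
          + (n : ℝ) * ‖xb‖ ^ (2 * m)) := by
        rw [← Finset.mul_sum, Finset.sum_add_distrib, Finset.sum_const, Finset.card_range,
          nsmul_eq_mul]
    _ ≤ 2 ^ (2 * m) * (∑ i ∈ Finset.range n, ‖x i‖ ^ (2 * m)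
          + (n : ℝ) * ((n : ℝ)⁻¹ * ∑ i ∈ Finset.range n, ‖x i‖ ^ (2 * m))) := by
        refine mul_le_mul_of_nonneg_left (by nlinarith) (by positivity)
    _ = 2 ^ (2 * m + 1) * ∑ i ∈ Finset.range n, ‖x i‖ ^ (2 * m) := by
        rw [← mul_assoc, mul_inv_cancel₀ hn0]
        ring

lemma pointwise_even {n m : ℕ} (hn : 1 ≤ n) (hm : 1 ≤ m) (x : ℕ → E) :
    (Fintype.card (Fin n → Fin n) : ℝ)⁻¹ *
        ∑ κ : Fin n → Fin n,
          ‖((n : ℝ)⁻¹ • ∑ j, x (κ j).val) - (n : ℝ)⁻¹ • ∑ i ∈ Finset.range n, x i‖ ^ (2 * m)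
      ≤ ((2 * m : ℝ) * (m : ℝ) ^ (2 * m) * 2 ^ (2 * m + 1)) * ((n : ℝ) ^ m)⁻¹ *
          ((n : ℝ)⁻¹ * ∑ i ∈ Finset.range n, ‖x i‖ ^ (2 * m)) := by
  classical
  have hn0 : (n : ℝ) ≠ 0 := Nat.cast_ne_zero.mpr (by omega)
  set xb : E := (n : ℝ)⁻¹ • ∑ i ∈ Finset.range n, x i with hxb
  set Y : Fin n → E := fun i => x i.val - xb with hY'
  have hsmul : ∀ v : E, (n : ℝ) • ((n : ℝ)⁻¹ • v) = v := by
    intro v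
    rw [smul_smul, mul_inv_cancel₀ hn0, one_smul]
  have hfin : ∑ i : Fin n, x i.val = ∑ i ∈ Finset.range n, x i :=
    Fin.sum_univ_eq_sum_range (fun i => x i) n
  have hY : ∑ i, Y i = 0 := by
    simp only [hY', Finset.sum_sub_distrib, Finset.sum_const, Finset.card_univ,
      Fintype.card_fin, hfin]
    rw [hxb, ← Nat.cast_smul_eq_nsmul ℝ n, hsmul, sub_self]
  have hvec : ∀ κ : Fin n → Fin n,
      ((n : ℝ)⁻¹ • ∑ j, x (κ j).val) - (n : ℝ)⁻¹ • ∑ i ∈ Finset.range n, x i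
        = (n : ℝ)⁻¹ • ∑ j, Y (κ j) := by
    intro κ
    simp only [hY', Finset.sum_sub_distrib, Finset.sum_const, Finset.card_univ,
      Fintype.card_fin]
    rw [smul_sub, ← Nat.cast_smul_eq_nsmul ℝ n, smul_smul, inv_mul_cancel₀ hn0, one_smul,
      hxb]
  have hYsum : ∑ i : Fin n, ‖Y i‖ ^ (2 * m)
      = ∑ i ∈ Finset.range n, ‖x i - xb‖ ^ (2 * m) := by
    exact Fin.sum_univ_eq_sum_range (fun i => ‖x i - xb‖ ^ (2 * m)) n
  have hnorm : ∀ κ : Fin n → Fin n,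
      ‖((n : ℝ)⁻¹ • ∑ j, x (κ j).val) - (n : ℝ)⁻¹ • ∑ i ∈ Finset.range n, x i‖ ^ (2 * m)
        = ((n : ℝ)⁻¹) ^ (2 * m) * ‖∑ j, Y (κ j)‖ ^ (2 * m) := by
    intro κ
    rw [hvec κ, norm_smul, Real.norm_eq_abs, abs_of_nonneg (by positivity), mul_pow]
  have hcard : (Fintype.card (Fin n → Fin n) : ℝ) = (n : ℝ) ^ n := by
    simp [Fintype.card_fun]
  have hkey := lemmaA hm Y hY
  have hcent : ∑ i : Fin n, ‖Y i‖ ^ (2 * m)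
      ≤ 2 ^ (2 * m + 1) * ∑ i ∈ Finset.range n, ‖x i‖ ^ (2 * m) := by
    rw [hYsum]; exact centered_sum_le hn hm x
  have hc0 : (0 : ℝ) ≤ ((n : ℝ) ^ n)⁻¹ * ((n : ℝ)⁻¹) ^ (2 * m) := by positivity
  have hkey2 : ∑ κ : Fin n → Fin n, ‖∑ j, Y (κ j)‖ ^ (2 * m)
      ≤ ((m : ℝ) ^ (2 * m) * (n : ℝ) ^ m) *
          ((2 * m : ℝ) * ((n : ℝ) ^ (n - 1)
            * (2 ^ (2 * m + 1) * ∑ i ∈ Finset.range n, ‖x i‖ ^ (2 * m)))) := by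
    refine hkey.trans ?_
    gcongr
  calc (Fintype.card (Fin n → Fin n) : ℝ)⁻¹ *
        ∑ κ : Fin n → Fin n,
          ‖((n : ℝ)⁻¹ • ∑ j, x (κ j).val) - (n : ℝ)⁻¹ • ∑ i ∈ Finset.range n, x i‖ ^ (2 * m)
      = ((n : ℝ) ^ n)⁻¹ * ((n : ℝ)⁻¹) ^ (2 * m)
          * ∑ κ : Fin n → Fin n, ‖∑ j, Y (κ j)‖ ^ (2 * m) := by
        rw [hcard]
        simp only [hnorm]
        rw [← Finset.mul_sum]
        ring
    _ ≤ ((n : ℝ) ^ n)⁻¹ * ((n : ℝ)⁻¹) ^ (2 * m)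
          * (((m : ℝ) ^ (2 * m) * (n : ℝ) ^ m) *
            ((2 * m : ℝ) * ((n : ℝ) ^ (n - 1)
              * (2 ^ (2 * m + 1) * ∑ i ∈ Finset.range n, ‖x i‖ ^ (2 * m))))) :=
        mul_le_mul_of_nonneg_left hkey2 hc0
    _ = ((2 * m : ℝ) * (m : ℝ) ^ (2 * m) * 2 ^ (2 * m + 1)) * ((n : ℝ) ^ m)⁻¹ *
          ((n : ℝ)⁻¹ * ∑ i ∈ Finset.range n, ‖x i‖ ^ (2 * m)) := by
        have hp : (n : ℝ) ^ (n - 1) = (n : ℝ) ^ n * (n : ℝ)⁻¹ := by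
          rw [pow_sub₀ _ hn0 hn, pow_one]
        rw [hp, inv_pow, show 2 * m = m + m by ring, pow_add]
        field_simp

lemma cs_helper {ι : Type*} [Fintype ι] (c : ℝ) (hc : 0 ≤ c) (w : ι → ℝ)
    (hw : ∀ i, 0 ≤ w i) (t : ℕ) (s : ℝ) (hs : 0 < s) :
    c * ∑ i, w i ^ (2 * t + 1)
      ≤ (s * (c * ∑ i, w i ^ (2 * t)) + s⁻¹ * (c * ∑ i, w i ^ (2 * t + 2))) / 2 := by
  set a := c * ∑ i, w i ^ (2 * t + 1) with ha
  set b := c * ∑ i, w i ^ (2 * t) with hb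
  set e := c * ∑ i, w i ^ (2 * t + 2) with he
  have ha0 : 0 ≤ a := mul_nonneg hc (Finset.sum_nonneg fun i _ => pow_nonneg (hw i) _)
  have hb0 : 0 ≤ b := mul_nonneg hc (Finset.sum_nonneg fun i _ => pow_nonneg (hw i) _)
  have he0 : 0 ≤ e := mul_nonneg hc (Finset.sum_nonneg fun i _ => pow_nonneg (hw i) _)
  have hcs : a ^ 2 ≤ b * e := by
    have h1 : (∑ i, w i ^ t * w i ^ (t + 1)) ^ 2
        ≤ (∑ i, (w i ^ t) ^ 2) * ∑ i, (w i ^ (t + 1)) ^ 2 :=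
      Finset.sum_mul_sq_le_sq_mul_sq _ _ _
    have e1 : ∀ i : ι, w i ^ t * w i ^ (t + 1) = w i ^ (2 * t + 1) := by
      intro i; rw [← pow_add]; ring_nf
    have e2 : ∀ i : ι, (w i ^ t) ^ 2 = w i ^ (2 * t) := by
      intro i; rw [← pow_mul]; ring_nf
    have e3 : ∀ i : ι, (w i ^ (t + 1)) ^ 2 = w i ^ (2 * t + 2) := by
      intro i; rw [← pow_mul]; ring_nf
    simp only [e1, e2, e3] at h1
    calc a ^ 2 = c ^ 2 * (∑ i, w i ^ (2 * t + 1)) ^ 2 := by rw [ha]; ring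
      _ ≤ c ^ 2 * ((∑ i, w i ^ (2 * t)) * ∑ i, w i ^ (2 * t + 2)) :=
          mul_le_mul_of_nonneg_left h1 (by positivity)
      _ = b * e := by rw [hb, he]; ring
  have hss : s * s⁻¹ = 1 := mul_inv_cancel₀ (ne_of_gt hs)
  have hkey : (s * b) * (s⁻¹ * e) = b * e := by
    calc (s * b) * (s⁻¹ * e) = (s * s⁻¹) * (b * e) := by ring
      _ = b * e := by rw [hss, one_mul]
  have h2 : (2 * a) ^ 2 ≤ (s * b + s⁻¹ * e) ^ 2 := by
    nlinarith [sq_nonneg (s * b - s⁻¹ * e)]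
  have h3 : 2 * a ≤ s * b + s⁻¹ * e := by
    refine (pow_le_pow_iff_left₀ (by linarith)
      (by positivity) (two_ne_zero)).mp h2
  linarith


end aux

section measure_level
variable {d : ℕ} {Ω : Type*} [MeasureSpace Ω] [IsProbabilityMeasure (ℙ : Measure Ω)]
  (μ : Measure (EuclideanSpace ℝ (Fin d))) [IsProbabilityMeasure μ]
  (X : ℕ → Ω → EuclideanSpace ℝ (Fin d))

lemma int_transfer (hmeas : ∀ i, Measurable (X i)) (hlaw : ∀ i, Measure.map (X i) ℙ = μ)
    (j : ℕ) (hj : Integrable (fun x => ‖x‖ ^ j) μ) (i : ℕ) :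
    Integrable (fun ω => ‖X i ω‖ ^ j) ℙ ∧ ∫ ω, ‖X i ω‖ ^ j ∂ℙ = ∫ x, ‖x‖ ^ j ∂μ := by
  constructor
  · have h := hj
    rw [← hlaw i] at h
    exact (integrable_map_measure (measurable_norm.pow_const _).aestronglyMeasurable
      (hmeas i).aemeasurable).mp h
  · rw [← hlaw i, integral_map (hmeas i).aemeasurable
      (measurable_norm.pow_const _).aestronglyMeasurable]



/-- even moment bound -/
lemma even_int (hmeas : ∀ i, Measurable (X i)) (hlaw : ∀ i, Measure.map (X i) ℙ = μ)
    (m : ℕ) (hm : 1 ≤ m) (hmom2 : Integrable (fun x => ‖x‖ ^ (2 * m)) μ)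
    (n : ℕ) (hn : 1 ≤ n) :
    ∫ ω, (Fintype.card (Fin n → Fin n) : ℝ)⁻¹ *
        ∑ κ : Fin n → Fin n, ‖((n : ℝ)⁻¹ • ∑ j, X (κ j).val ω)
          - (n : ℝ)⁻¹ • ∑ i ∈ Finset.range n, X i ω‖ ^ (2 * m) ∂ℙ
      ≤ ((2 * m : ℝ) * (m : ℝ) ^ (2 * m) * 2 ^ (2 * m + 1)) * (∫ x, ‖x‖ ^ (2 * m) ∂μ)
          * ((n : ℝ) ^ m)⁻¹ := by
  have hn0 : ((n : ℝ)) ≠ 0 := Nat.cast_ne_zero.mpr (by omega)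
  set c : ℝ := (2 * m : ℝ) * (m : ℝ) ^ (2 * m) * 2 ^ (2 * m + 1) with hc
  set M : ℝ := ∫ x, ‖x‖ ^ (2 * m) ∂μ with hM
  have hint := fun i => (int_transfer μ X hmeas hlaw (2 * m) hmom2 i).1
  have hval := fun i => (int_transfer μ X hmeas hlaw (2 * m) hmom2 i).2
  have hgint : Integrable (fun ω =>
      c * ((n : ℝ) ^ m)⁻¹ * ((n : ℝ)⁻¹ * ∑ i ∈ Finset.range n, ‖X i ω‖ ^ (2 * m))) ℙ := by
    exact (((integrable_finset_sum _ (fun i _ => hint i)).const_mul _).const_mul _)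
  calc ∫ ω, (Fintype.card (Fin n → Fin n) : ℝ)⁻¹ *
        ∑ κ : Fin n → Fin n, ‖((n : ℝ)⁻¹ • ∑ j, X (κ j).val ω)
          - (n : ℝ)⁻¹ • ∑ i ∈ Finset.range n, X i ω‖ ^ (2 * m) ∂ℙ
      ≤ ∫ ω, c * ((n : ℝ) ^ m)⁻¹ *
          ((n : ℝ)⁻¹ * ∑ i ∈ Finset.range n, ‖X i ω‖ ^ (2 * m)) ∂ℙ := by
        refine integral_mono_of_nonneg (Filter.Eventually.of_forall fun ω => by positivity)
          hgint (Filter.Eventually.of_forall fun ω => ?_)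
        exact pointwise_even hn hm (fun l => X l ω)
    _ = c * ((n : ℝ) ^ m)⁻¹ *
          ((n : ℝ)⁻¹ * ∑ i ∈ Finset.range n, ∫ ω, ‖X i ω‖ ^ (2 * m) ∂ℙ) := by
        rw [integral_const_mul, integral_const_mul, integral_finset_sum _ (fun i _ => hint i)]
    _ = c * M * ((n : ℝ) ^ m)⁻¹ := by
        have : ∑ i ∈ Finset.range n, ∫ ω, ‖X i ω‖ ^ (2 * m) ∂ℙ = (n : ℝ) * M := by
          rw [Finset.sum_congr rfl (fun i _ => hval i), Finset.sum_const, Finset.card_range,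
            nsmul_eq_mul]
        rw [this]
        field_simp

lemma piece (hmeas : ∀ i, Measurable (X i)) (hlaw : ∀ i, Measure.map (X i) ℙ = μ)
    (j : ℕ) (hj : Integrable (fun x => ‖x‖ ^ j) μ) (n : ℕ) (hn : 1 ≤ n) (r : ℝ) :
    Integrable (fun ω => r * ((n : ℝ)⁻¹ * ∑ i ∈ Finset.range n, ‖X i ω‖ ^ j)) ℙ ∧
    ∫ ω, r * ((n : ℝ)⁻¹ * ∑ i ∈ Finset.range n, ‖X i ω‖ ^ j) ∂ℙ = r * ∫ x, ‖x‖ ^ j ∂μ := by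
  have hn0 : ((n : ℝ)) ≠ 0 := Nat.cast_ne_zero.mpr (by omega)
  have hint := fun i => (int_transfer μ X hmeas hlaw j hj i).1
  have hval := fun i => (int_transfer μ X hmeas hlaw j hj i).2
  constructor
  · exact ((integrable_finset_sum _ (fun i _ => hint i)).const_mul _).const_mul _
  · rw [integral_const_mul, integral_const_mul, integral_finset_sum _ (fun i _ => hint i)]
    have : ∑ i ∈ Finset.range n, ∫ ω, ‖X i ω‖ ^ j ∂ℙ = (n : ℝ) * ∫ x, ‖x‖ ^ j ∂μ := by
      rw [Finset.sum_congr rfl (fun i _ => hval i), Finset.sum_const, Finset.card_range,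
        nsmul_eq_mul]
    rw [this]
    field_simp

lemma odd_int (hmeas : ∀ i, Measurable (X i)) (hlaw : ∀ i, Measure.map (X i) ℙ = μ)
    (t : ℕ) (c1 : ℝ) (hc1 : 0 ≤ c1)
    (hmA : Integrable (fun x => ‖x‖ ^ (2 * t)) μ)
    (hmB : Integrable (fun x => ‖x‖ ^ (2 * (t + 1))) μ)
    (n : ℕ) (hn : 1 ≤ n)
    (hpt : ∀ ω, (Fintype.card (Fin n → Fin n) : ℝ)⁻¹ *
        ∑ κ : Fin n → Fin n, ‖((n : ℝ)⁻¹ • ∑ j, X (κ j).val ω)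
          - (n : ℝ)⁻¹ • ∑ i ∈ Finset.range n, X i ω‖ ^ (2 * t)
      ≤ c1 * ((n : ℝ) ^ t)⁻¹ * ((n : ℝ)⁻¹ * ∑ i ∈ Finset.range n, ‖X i ω‖ ^ (2 * t))) :
    ∫ ω, (Fintype.card (Fin n → Fin n) : ℝ)⁻¹ *
        ∑ κ : Fin n → Fin n, ‖((n : ℝ)⁻¹ • ∑ j, X (κ j).val ω)
          - (n : ℝ)⁻¹ • ∑ i ∈ Finset.range n, X i ω‖ ^ (2 * t + 1) ∂ℙ
      ≤ ((n : ℝ) ^ (-(1 : ℝ) / 2) *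
            (c1 * ((n : ℝ) ^ t)⁻¹ * ∫ x, ‖x‖ ^ (2 * t) ∂μ)
          + ((n : ℝ) ^ (-(1 : ℝ) / 2))⁻¹ *
            (((2 * (t + 1) : ℝ) * ((t + 1) : ℝ) ^ (2 * (t + 1)) * 2 ^ (2 * (t + 1) + 1))
              * ((n : ℝ) ^ (t + 1))⁻¹ * ∫ x, ‖x‖ ^ (2 * (t + 1)) ∂μ)) / 2 := by
  have hnpos : (0 : ℝ) < n := by exact_mod_cast Nat.lt_of_lt_of_le Nat.zero_lt_one hn
  set s : ℝ := (n : ℝ) ^ (-(1 : ℝ) / 2) with hs'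
  have hs : 0 < s := Real.rpow_pos_of_pos hnpos _
  set c2 : ℝ := (2 * (t + 1) : ℝ) * ((t + 1) : ℝ) ^ (2 * (t + 1)) * 2 ^ (2 * (t + 1) + 1)
    with hc2
  have hp1 := piece μ X hmeas hlaw (2 * t) hmA n hn (s * (c1 * ((n : ℝ) ^ t)⁻¹))
  have hp2 := piece μ X hmeas hlaw (2 * (t + 1)) hmB n hn
    (s⁻¹ * (c2 * ((n : ℝ) ^ (t + 1))⁻¹))
  have hgint : Integrable (fun ω =>
      (s * (c1 * ((n : ℝ) ^ t)⁻¹) * ((n : ℝ)⁻¹ * ∑ i ∈ Finset.range n, ‖X i ω‖ ^ (2 * t))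
        + s⁻¹ * (c2 * ((n : ℝ) ^ (t + 1))⁻¹)
          * ((n : ℝ)⁻¹ * ∑ i ∈ Finset.range n, ‖X i ω‖ ^ (2 * (t + 1)))) / 2) ℙ :=
    (hp1.1.add hp2.1).div_const 2
  calc ∫ ω, (Fintype.card (Fin n → Fin n) : ℝ)⁻¹ *
        ∑ κ : Fin n → Fin n, ‖((n : ℝ)⁻¹ • ∑ j, X (κ j).val ω)
          - (n : ℝ)⁻¹ • ∑ i ∈ Finset.range n, X i ω‖ ^ (2 * t + 1) ∂ℙ
      ≤ ∫ ω, (s * (c1 * ((n : ℝ) ^ t)⁻¹)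
            * ((n : ℝ)⁻¹ * ∑ i ∈ Finset.range n, ‖X i ω‖ ^ (2 * t))
          + s⁻¹ * (c2 * ((n : ℝ) ^ (t + 1))⁻¹)
            * ((n : ℝ)⁻¹ * ∑ i ∈ Finset.range n, ‖X i ω‖ ^ (2 * (t + 1)))) / 2 ∂ℙ := by
        refine integral_mono_of_nonneg (Filter.Eventually.of_forall fun ω => by positivity)
          hgint (Filter.Eventually.of_forall fun ω => ?_)
        have h1 := cs_helper ((Fintype.card (Fin n → Fin n) : ℝ))⁻¹ (by positivity)
          (fun κ : Fin n → Fin n => ‖((n : ℝ)⁻¹ • ∑ j, X (κ j).val ω)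
            - (n : ℝ)⁻¹ • ∑ i ∈ Finset.range n, X i ω‖)
          (fun κ => norm_nonneg _) t s hs
        beta_reduce at h1
        have h2 := hpt ω
        have h3 := pointwise_even (m := t + 1) hn (by omega) (fun l => X l ω)
        refine h1.trans ?_
        have e1 : (2 * t + 2 : ℕ) = 2 * (t + 1) := by ring
        rw [e1]
        have key1 : s * ((Fintype.card (Fin n → Fin n) : ℝ)⁻¹ *
            ∑ κ : Fin n → Fin n, ‖((n : ℝ)⁻¹ • ∑ j, X (κ j).val ω)
              - (n : ℝ)⁻¹ • ∑ i ∈ Finset.range n, X i ω‖ ^ (2 * t))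
            ≤ s * (c1 * ((n : ℝ) ^ t)⁻¹
              * ((n : ℝ)⁻¹ * ∑ i ∈ Finset.range n, ‖X i ω‖ ^ (2 * t))) :=
          mul_le_mul_of_nonneg_left h2 hs.le
        have key2 : s⁻¹ * ((Fintype.card (Fin n → Fin n) : ℝ)⁻¹ *
            ∑ κ : Fin n → Fin n, ‖((n : ℝ)⁻¹ • ∑ j, X (κ j).val ω)
              - (n : ℝ)⁻¹ • ∑ i ∈ Finset.range n, X i ω‖ ^ (2 * (t + 1)))
            ≤ s⁻¹ * (c2 * ((n : ℝ) ^ (t + 1))⁻¹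
              * ((n : ℝ)⁻¹ * ∑ i ∈ Finset.range n, ‖X i ω‖ ^ (2 * (t + 1)))) :=
          mul_le_mul_of_nonneg_left (by rw [hc2]; exact_mod_cast h3) (inv_nonneg.mpr hs.le)
        have := add_le_add key1 key2
        linarith [this]
    _ = (s * (c1 * ((n : ℝ) ^ t)⁻¹) * ∫ x, ‖x‖ ^ (2 * t) ∂μ
          + s⁻¹ * (c2 * ((n : ℝ) ^ (t + 1))⁻¹) * ∫ x, ‖x‖ ^ (2 * (t + 1)) ∂μ) / 2 := by
        rw [integral_div, integral_add hp1.1 hp2.1, hp1.2, hp2.2]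
    _ = (s * (c1 * ((n : ℝ) ^ t)⁻¹ * ∫ x, ‖x‖ ^ (2 * t) ∂μ)
          + s⁻¹ * (c2 * ((n : ℝ) ^ (t + 1))⁻¹ * ∫ x, ‖x‖ ^ (2 * (t + 1)) ∂μ)) / 2 := by
        ring


end measure_level

/-- for i.i.d. samples from `μ` (finite eighth moments) with average `x̄`,
and `x̃` the average of `n` uniform resamples (the resampling expectation is written as
the uniform average over index maps `κ : Fin n → Fin n`), for `1 ≤ k ≤ 8`,
`E‖x̃-x̄‖^k = O(n^{-k/2})`. -/
theorem stmt_9 {d : ℕ} {Ω : Type*} [MeasureSpace Ω] [IsProbabilityMeasure (ℙ : Measure Ω)]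
    (μ : Measure (EuclideanSpace ℝ (Fin d))) [IsProbabilityMeasure μ]
    (X : ℕ → Ω → EuclideanSpace ℝ (Fin d)) (hmeas : ∀ i, Measurable (X i))
    (hindep : iIndepFun X ℙ)
    (hlaw : ∀ i, Measure.map (X i) ℙ = μ)
    (hmom : ∀ j ≤ 8, Integrable (fun x => ‖x‖ ^ j) μ)
    (k : ℕ) (hk : 1 ≤ k) (hk8 : k ≤ 8) :
    ∃ C : ℝ, ∀ n : ℕ, 1 ≤ n →
      ∫ ω, (Fintype.card (Fin n → Fin n) : ℝ)⁻¹ *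
          ∑ κ : Fin n → Fin n,
            ‖((n : ℝ)⁻¹ • ∑ j, X (κ j).val ω)
              - (n : ℝ)⁻¹ • ∑ i ∈ Finset.range n, X i ω‖ ^ k ∂ℙ
        ≤ C * (n : ℝ) ^ (-(k : ℝ) / 2) := by
  rcases Nat.even_or_odd k with hke | hko
  · -- even case : k = 2 * m
    obtain ⟨m, hmeq⟩ := hke
    have hk2m : k = 2 * m := by omega
    subst hk2m
    have hm1 : 1 ≤ m := by omega
    have hmom2 : Integrable (fun x => ‖x‖ ^ (2 * m)) μ := hmom (2 * m) (by omega)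
    refine ⟨((2 * m : ℝ) * (m : ℝ) ^ (2 * m) * 2 ^ (2 * m + 1)) * ∫ x, ‖x‖ ^ (2 * m) ∂μ,
      fun n hn => ?_⟩
    have hnpos : (0 : ℝ) < n := by exact_mod_cast Nat.lt_of_lt_of_le Nat.zero_lt_one hn
    have hr : ((n : ℝ)) ^ (-((2 * m : ℕ) : ℝ) / 2) = ((n : ℝ) ^ m)⁻¹ := by
      rw [show (-((2 * m : ℕ) : ℝ) / 2) = -(m : ℝ) by push_cast; ring]
      rw [← Real.rpow_natCast (n : ℝ) m, ← Real.rpow_neg hnpos.le]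
    rw [hr]
    exact even_int μ X hmeas hlaw m hm1 hmom2 n hn
  · -- odd case : k = 2 * t + 1
    obtain ⟨t, hteq⟩ := hko
    subst hteq
    have hmA : Integrable (fun x => ‖x‖ ^ (2 * t)) μ := hmom (2 * t) (by omega)
    have hmB : Integrable (fun x => ‖x‖ ^ (2 * (t + 1))) μ := hmom (2 * (t + 1)) (by omega)
    -- choose the constant for the even bound at level 2t
    set c1 : ℝ := if t = 0 then 1 else (2 * t : ℝ) * (t : ℝ) ^ (2 * t) * 2 ^ (2 * t + 1)
      with hc1def
    have hc1 : 0 ≤ c1 := by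
      rw [hc1def]; split <;> positivity
    set c2 : ℝ := (2 * (t + 1) : ℝ) * ((t + 1) : ℝ) ^ (2 * (t + 1)) * 2 ^ (2 * (t + 1) + 1)
      with hc2def
    refine ⟨(c1 * ∫ x, ‖x‖ ^ (2 * t) ∂μ + c2 * ∫ x, ‖x‖ ^ (2 * (t + 1)) ∂μ) / 2,
      fun n hn => ?_⟩
    have hnpos : (0 : ℝ) < n := by exact_mod_cast Nat.lt_of_lt_of_le Nat.zero_lt_one hn
    have hn0 : ((n : ℝ)) ≠ 0 := ne_of_gt hnpos
    have hpt : ∀ ω, (Fintype.card (Fin n → Fin n) : ℝ)⁻¹ *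
        ∑ κ : Fin n → Fin n, ‖((n : ℝ)⁻¹ • ∑ j, X (κ j).val ω)
          - (n : ℝ)⁻¹ • ∑ i ∈ Finset.range n, X i ω‖ ^ (2 * t)
        ≤ c1 * ((n : ℝ) ^ t)⁻¹ * ((n : ℝ)⁻¹ * ∑ i ∈ Finset.range n, ‖X i ω‖ ^ (2 * t)) := by
      intro ω
      by_cases ht0 : t = 0
      · subst ht0
        have hcard0 : (Fintype.card (Fin n → Fin n) : ℝ) ≠ 0 := by
          have : Nonempty (Fin n → Fin n) := ⟨id⟩
          exact_mod_cast Fintype.card_ne_zero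
        have hL : (Fintype.card (Fin n → Fin n) : ℝ)⁻¹ *
            ∑ κ : Fin n → Fin n, ‖((n : ℝ)⁻¹ • ∑ j, X (κ j).val ω)
              - (n : ℝ)⁻¹ • ∑ i ∈ Finset.range n, X i ω‖ ^ (2 * 0) = 1 := by
          simp only [Nat.mul_zero, pow_zero, Finset.sum_const, Finset.card_univ,
            nsmul_eq_mul, mul_one]
          exact inv_mul_cancel₀ hcard0
        have hR : c1 * ((n : ℝ) ^ 0)⁻¹ *
            ((n : ℝ)⁻¹ * ∑ i ∈ Finset.range n, ‖X i ω‖ ^ (2 * 0)) = 1 := by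
          simp only [hc1def, Nat.mul_zero, pow_zero, Finset.sum_const,
            Finset.card_range, nsmul_eq_mul, mul_one, one_mul, inv_one, if_true,
            eq_self_iff_true]
          exact inv_mul_cancel₀ hn0
        rw [hL, hR]
      · have ht1 : 1 ≤ t := by omega
        have h := pointwise_even (m := t) hn ht1 (fun l => X l ω)
        rw [hc1def, if_neg ht0]
        exact h
    have hkey := odd_int μ X hmeas hlaw t c1 hc1 hmA hmB n hn hpt
    refine hkey.trans ?_
    -- rpow arithmetic
    set s : ℝ := (n : ℝ) ^ (-(1 : ℝ) / 2) with hs'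
    have e1 : s * ((n : ℝ) ^ t)⁻¹ = (n : ℝ) ^ (-((2 * t + 1 : ℕ) : ℝ) / 2) := by
      rw [hs', ← Real.rpow_natCast (n : ℝ) t, ← Real.rpow_neg hnpos.le,
        ← Real.rpow_add hnpos]
      congr 1
      push_cast
      ring
    have e2 : s⁻¹ * ((n : ℝ) ^ (t + 1))⁻¹ = (n : ℝ) ^ (-((2 * t + 1 : ℕ) : ℝ) / 2) := by
      rw [hs', ← Real.rpow_natCast (n : ℝ) (t + 1), ← Real.rpow_neg hnpos.le,
        ← Real.rpow_neg hnpos.le, ← Real.rpow_add hnpos]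
      congr 1
      push_cast
      ring
    have heq : (s * (c1 * ((n : ℝ) ^ t)⁻¹ * ∫ x, ‖x‖ ^ (2 * t) ∂μ)
          + s⁻¹ * (c2 * ((n : ℝ) ^ (t + 1))⁻¹ * ∫ x, ‖x‖ ^ (2 * (t + 1)) ∂μ)) / 2
        = ((c1 * ∫ x, ‖x‖ ^ (2 * t) ∂μ + c2 * ∫ x, ‖x‖ ^ (2 * (t + 1)) ∂μ) / 2)
            * (n : ℝ) ^ (-((2 * t + 1 : ℕ) : ℝ) / 2) := by
      calc (s * (c1 * ((n : ℝ) ^ t)⁻¹ * ∫ x, ‖x‖ ^ (2 * t) ∂μ)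
          + s⁻¹ * (c2 * ((n : ℝ) ^ (t + 1))⁻¹ * ∫ x, ‖x‖ ^ (2 * (t + 1)) ∂μ)) / 2
          = ((c1 * ∫ x, ‖x‖ ^ (2 * t) ∂μ) * (s * ((n : ℝ) ^ t)⁻¹)
            + (c2 * ∫ x, ‖x‖ ^ (2 * (t + 1)) ∂μ) * (s⁻¹ * ((n : ℝ) ^ (t + 1))⁻¹)) / 2 := by
            ring
        _ = ((c1 * ∫ x, ‖x‖ ^ (2 * t) ∂μ) * ((n : ℝ) ^ (-((2 * t + 1 : ℕ) : ℝ) / 2))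
            + (c2 * ∫ x, ‖x‖ ^ (2 * (t + 1)) ∂μ)
              * ((n : ℝ) ^ (-((2 * t + 1 : ℕ) : ℝ) / 2))) / 2 := by
            rw [e1, e2]
        _ = ((c1 * ∫ x, ‖x‖ ^ (2 * t) ∂μ + c2 * ∫ x, ‖x‖ ^ (2 * (t + 1)) ∂μ) / 2)
            * (n : ℝ) ^ (-((2 * t + 1 : ℕ) : ℝ) / 2) := by
            ring
    rw [heq]
end
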